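/- arXiv:1611.09639 — 3 statements merged into one kernel-verified Lean document; each statement's English description precedes it below -/
import Mathlib

section
/- Let V be a finite-dimensional normed real vector space and let 0 < ρ ≤ 1/2. If A ⊆ B(0, ρ^{-1}) is ρ-away from linear subspaces, then A contains a ρ-almost orthonormal basis of V. Conversely, there exist constants C ≥ 1 and c > 0 depending only on V such that if A contains a ρ-almost orthonormal basis of V, then A is cρ^C-away from linear subspaces. -/
open Pointwise

/-- `A` is `ρ`-away from linear subspaces: every proper linear subspace of `V` has a point
of `A` at distance at least `ρ` from it. -/
def AwayFromSubspaces {V : Type*} [NormedAddCommGroup V] [NormedSpace ℝ V]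
    (ρ : ℝ) (A : Set V) : Prop :=
  ∀ W : Submodule ℝ V, W ≠ ⊤ → ∃ a ∈ A, ρ ≤ Metric.infDist a (W : Set V)

/-- `(a_1, …, a_n)` is a `ρ`-almost orthonormal family: every `a_k` has norm at most `ρ⁻¹`
and is at distance at least `ρ` from the span of the previous vectors. -/
def AlmostONB {V : Type*} [NormedAddCommGroup V] [NormedSpace ℝ V] (ρ : ℝ)
    {n : ℕ} (a : Fin n → V) : Prop :=
  ∀ k : Fin n, ‖a k‖ ≤ ρ⁻¹ ∧
    ρ ≤ Metric.infDist (a k) (Submodule.span ℝ (a '' {j | j < k}) : Set V)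

/-! The first half is a greedy construction: fewer than `dim V` chosen vectors span a proper
subspace, from which `A` has a point at distance at least `ρ`.

For the converse, the distance condition peels off the last coefficient of a combination,
`|cₙ| ρ ≤ ‖∑ cᵢ aᵢ‖`, so by induction every coefficient of `x` in the basis `a` is at most
`K ‖x‖` with `K = ρ⁻¹ (1 + ρ⁻²)ⁿ`. If all `aᵢ` were within `ε` of a proper subspace `W`, every `x`
would be within `n K ε ‖x‖` of `W`, which Riesz's lemma forbids once `n K ε < 1`; for
`ρ ≤ 1/2` one has `K ≤ ρ^-(3n+1)`. -/

open Metric Module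

section Snoc

variable {α : Type*} {n : ℕ} (a : Fin n → α) (x : α)

theorem Fin.image_snoc_lt_castSucc (i : Fin n) :
    (Fin.snoc a x : Fin (n + 1) → α) '' {j | j < i.castSucc} = a '' {j | j < i} := by
  change _ '' Set.Iio _ = _ '' Set.Iio _
  rw [← Fin.image_castSucc_Iio, Set.image_image]
  simp only [Fin.snoc_castSucc]

theorem Fin.image_snoc_lt_last :
    (Fin.snoc a x : Fin (n + 1) → α) '' {j | j < Fin.last n} = Set.range a := by
  have : {j | j < Fin.last n} = Set.range (Fin.castSucc : Fin n → Fin (n + 1)) := by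
    ext j; simp [Fin.lt_def]
  rw [this, ← Set.range_comp]
  simp only [Fin.snoc_comp_castSucc]

end Snoc

section Quotient

variable {𝕜 V : Type*} [NormedField 𝕜] [NormedAddCommGroup V] [NormedSpace 𝕜 V]

theorem Submodule.infDist_eq_norm_mkQ (W : Submodule 𝕜 V) (x : V) :
    infDist x (W : Set V) = ‖W.mkQ x‖ :=
  (QuotientAddGroup.norm_mk (S := W.toAddSubgroup) x).symm

theorem Submodule.infDist_smul_add_of_mem {W : Submodule 𝕜 V} (c : 𝕜) (x : V) {w : V}
    (hw : w ∈ W) : infDist (c • x + w) (W : Set V) = ‖c‖ * infDist x (W : Set V) := by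
  simp only [W.infDist_eq_norm_mkQ, map_add, map_smul, W.mkQ_apply w,
    (Submodule.Quotient.mk_eq_zero W).2 hw, add_zero, norm_smul]

theorem Submodule.infDist_sum_smul_le {ι : Type*} (W : Submodule 𝕜 V) (s : Finset ι)
    (g : ι → 𝕜) (a : ι → V) :
    infDist (∑ i ∈ s, g i • a i) (W : Set V) ≤ ∑ i ∈ s, ‖g i‖ * infDist (a i) (W : Set V) := by
  simp only [W.infDist_eq_norm_mkQ, map_sum, map_smul]
  exact (norm_sum_le _ _).trans (Finset.sum_le_sum fun i _ => (norm_smul _ _).le)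

theorem Submodule.eq_top_of_infDist_le_mul_norm {W : Submodule 𝕜 V} (hW : IsClosed (W : Set V))
    {θ : ℝ} (hθ : θ < 1) (h : ∀ x, infDist x (W : Set V) ≤ θ * ‖x‖) : W = ⊤ := by
  by_contra hne
  obtain ⟨r, hθr, hr⟩ := exists_between hθ
  obtain ⟨x₀, hx₀, hriesz⟩ := riesz_lemma hW (by simpa [Submodule.eq_top_iff'] using hne) hr
  have hx₀pos : 0 < ‖x₀‖ := norm_pos_iff.2 fun h0 => hx₀ (h0 ▸ W.zero_mem)
  have : r * ‖x₀‖ ≤ θ * ‖x₀‖ :=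
    ((le_infDist ⟨0, W.zero_mem⟩).2 fun y hy => by simpa [dist_eq_norm] using hriesz y hy).trans
      (h x₀)
  nlinarith

end Quotient

theorem inv_mul_one_add_inv_sq_pow_le {ρ : ℝ} (hρ : 0 < ρ) (hρ2 : ρ ≤ 1 / 2) (n : ℕ) :
    ρ⁻¹ * (1 + ρ⁻¹ ^ 2) ^ n ≤ ρ⁻¹ ^ (3 * n + 1) := by
  have h2 : 2 ≤ ρ⁻¹ := by rw [le_inv_comm₀ two_pos hρ]; linarith
  have h3 : 1 + ρ⁻¹ ^ 2 ≤ ρ⁻¹ ^ 3 := by nlinarith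
  calc ρ⁻¹ * (1 + ρ⁻¹ ^ 2) ^ n ≤ ρ⁻¹ * (ρ⁻¹ ^ 3) ^ n := by gcongr
    _ = ρ⁻¹ ^ (3 * n + 1) := by ring

namespace AlmostONB

variable {V : Type*} [NormedAddCommGroup V] [NormedSpace ℝ V] {ρ : ℝ} {n : ℕ}

theorem snoc_iff {a : Fin n → V} {x : V} :
    AlmostONB ρ (Fin.snoc a x : Fin (n + 1) → V) ↔
      AlmostONB ρ a ∧ ‖x‖ ≤ ρ⁻¹ ∧ ρ ≤ infDist x (Submodule.span ℝ (Set.range a) : Set V) := by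
  simp only [AlmostONB, Fin.forall_fin_succ', Fin.snoc_castSucc, Fin.snoc_last,
    Fin.image_snoc_lt_castSucc, Fin.image_snoc_lt_last]

theorem abs_le_mul_norm_sum (hρ : 0 < ρ) {a : Fin n → V} (ha : AlmostONB ρ a)
    (c : Fin n → ℝ) (i : Fin n) :
    |c i| ≤ ρ⁻¹ * (1 + ρ⁻¹ ^ 2) ^ n * ‖∑ j, c j • a j‖ := by
  induction n with
  | zero => exact i.elim0
  | succ n ih =>
    rw [← Fin.snoc_init_self a, snoc_iff] at ha
    obtain ⟨ha', hlast_norm, hlast_dist⟩ := ha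
    set S := Submodule.span ℝ (Set.range (Fin.init a))
    set u := ∑ j : Fin n, Fin.init c j • Fin.init a j
    have hv : ∑ j, c j • a j = c (Fin.last n) • a (Fin.last n) + u := by
      rw [Fin.sum_univ_castSucc, add_comm]; rfl
    set v := ∑ j, c j • a j
    have hu : u ∈ S :=
      Submodule.sum_mem _ fun j _ => Submodule.smul_mem _ _ (Submodule.subset_span ⟨j, rfl⟩)
    have hc_last : |c (Fin.last n)| ≤ ρ⁻¹ * ‖v‖ := by
      rw [inv_mul_eq_div, le_div_iff₀ hρ]
      calc |c (Fin.last n)| * ρ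
          ≤ |c (Fin.last n)| * infDist (a (Fin.last n)) S :=
            mul_le_mul_of_nonneg_left hlast_dist (abs_nonneg _)
        _ = infDist v S := by rw [hv, Submodule.infDist_smul_add_of_mem _ _ hu, Real.norm_eq_abs]
        _ ≤ ‖v‖ := (infDist_le_dist_of_mem S.zero_mem).trans_eq (dist_zero_right v)
    have hu_norm : ‖u‖ ≤ (1 + ρ⁻¹ ^ 2) * ‖v‖ :=
      calc ‖u‖ = ‖v - c (Fin.last n) • a (Fin.last n)‖ := by rw [hv, add_sub_cancel_left]
        _ ≤ ‖v‖ + |c (Fin.last n)| * ‖a (Fin.last n)‖ := by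
            rw [← Real.norm_eq_abs, ← norm_smul]; exact norm_sub_le _ _
        _ ≤ ‖v‖ + ρ⁻¹ * ‖v‖ * ρ⁻¹ := by gcongr
        _ = (1 + ρ⁻¹ ^ 2) * ‖v‖ := by ring
    have hK : ρ⁻¹ ≤ ρ⁻¹ * (1 + ρ⁻¹ ^ 2) ^ (n + 1) :=
      le_mul_of_one_le_right (inv_nonneg.2 hρ.le)
        (one_le_pow₀ (le_add_of_nonneg_right (by positivity)))
    induction i using Fin.lastCases with
    | last => exact hc_last.trans (mul_le_mul_of_nonneg_right hK (norm_nonneg v))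
    | cast j =>
      calc |c j.castSucc| ≤ ρ⁻¹ * (1 + ρ⁻¹ ^ 2) ^ n * ‖u‖ := ih ha' (Fin.init c) j
        _ ≤ ρ⁻¹ * (1 + ρ⁻¹ ^ 2) ^ n * ((1 + ρ⁻¹ ^ 2) * ‖v‖) := by gcongr
        _ = ρ⁻¹ * (1 + ρ⁻¹ ^ 2) ^ (n + 1) * ‖v‖ := by ring

theorem linearIndependent (hρ : 0 < ρ) {a : Fin n → V} (ha : AlmostONB ρ a) :
    LinearIndependent ℝ a :=
  Fintype.linearIndependent_iff.2 fun c hc i =>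
    abs_nonpos_iff.1 <| by simpa [hc] using ha.abs_le_mul_norm_sum hρ c i

theorem awayFromSubspaces_of_mul_lt_one [FiniteDimensional ℝ V] (hρ : 0 < ρ)
    {a : Fin (finrank ℝ V) → V} (ha : AlmostONB ρ a) {A : Set V} (haA : ∀ k, a k ∈ A) {ε : ℝ}
    (hε : finrank ℝ V * (ρ⁻¹ * (1 + ρ⁻¹ ^ 2) ^ finrank ℝ V) * ε < 1) :
    AwayFromSubspaces ε A := by
  intro W hW
  by_contra! hclose
  set K := ρ⁻¹ * (1 + ρ⁻¹ ^ 2) ^ finrank ℝ V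
  let b := basisOfLinearIndependentOfCardEqFinrank' a (ha.linearIndependent hρ) (by simp)
  refine hW (W.eq_top_of_infDist_le_mul_norm W.closed_of_finiteDimensional hε fun x => ?_)
  have hx : ∑ i, b.repr x i • a i = x := by
    simpa [b] using b.sum_repr x
  calc infDist x W = infDist (∑ i, b.repr x i • a i) W := by rw [hx]
    _ ≤ ∑ i, ‖b.repr x i‖ * infDist (a i) W := W.infDist_sum_smul_le _ _ _
    _ ≤ ∑ _i : Fin (finrank ℝ V), K * ‖x‖ * ε := by
        refine Finset.sum_le_sum fun i _ => mul_le_mul ?_ (hclose _ (haA i)).le infDist_nonneg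
          (by positivity)
        rw [Real.norm_eq_abs]
        simpa only [hx] using ha.abs_le_mul_norm_sum hρ (b.repr x) i
    _ = finrank ℝ V * K * ε * ‖x‖ := by
        simp only [Finset.sum_const, Finset.card_univ, Fintype.card_fin, nsmul_eq_mul]; ring

theorem awayFromSubspaces [FiniteDimensional ℝ V] (hρ : 0 < ρ) (hρ2 : ρ ≤ 1 / 2)
    {a : Fin (finrank ℝ V) → V} (ha : AlmostONB ρ a) {A : Set V} (haA : ∀ k, a k ∈ A) :
    AwayFromSubspaces (((finrank ℝ V : ℝ) + 1)⁻¹ * ρ ^ (3 * finrank ℝ V + 1)) A := by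
  set n := finrank ℝ V
  refine ha.awayFromSubspaces_of_mul_lt_one hρ haA ?_
  calc (n : ℝ) * (ρ⁻¹ * (1 + ρ⁻¹ ^ 2) ^ n) * (((n : ℝ) + 1)⁻¹ * ρ ^ (3 * n + 1))
      = n / (n + 1) * ((ρ⁻¹ * (1 + ρ⁻¹ ^ 2) ^ n) * ρ ^ (3 * n + 1)) := by ring
    _ ≤ n / (n + 1) * (ρ⁻¹ ^ (3 * n + 1) * ρ ^ (3 * n + 1)) := by
        gcongr; exact inv_mul_one_add_inv_sq_pow_le hρ hρ2 n
    _ = n / (n + 1) := by rw [← mul_pow, inv_mul_cancel₀ hρ.ne', one_pow, mul_one]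
    _ < 1 := by rw [div_lt_one (by positivity)]; linarith

end AlmostONB

theorem exists_almostONB_of_awayFromSubspaces {V : Type*} [NormedAddCommGroup V]
    [NormedSpace ℝ V] {ρ : ℝ} {A : Set V} (hA : A ⊆ closedBall 0 ρ⁻¹)
    (hAway : AwayFromSubspaces ρ A) {m : ℕ} (hm : m ≤ finrank ℝ V) :
    ∃ a : Fin m → V, (∀ k, a k ∈ A) ∧ AlmostONB ρ a := by
  induction m with
  | zero => exact ⟨Fin.elim0, fun k => k.elim0, fun k => k.elim0⟩
  | succ m ih =>
    obtain ⟨a, haA, ha⟩ := ih (by omega)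
    have hspan : Submodule.span ℝ (Set.range a) ≠ ⊤ := fun htop => by
      have := finrank_range_le_card (R := ℝ) a
      rw [Set.finrank, htop, finrank_top, Fintype.card_fin] at this
      omega
    obtain ⟨x, hxA, hx⟩ := hAway _ hspan
    refine ⟨Fin.snoc a x, Fin.forall_fin_succ'.2 ?_, AlmostONB.snoc_iff.2 ⟨ha, ?_, hx⟩⟩
    · simpa using ⟨haA, hxA⟩
    · simpa using hA hxA

/-- **Lemma 2.4**: a subset of `B(0, ρ⁻¹)` which is `ρ`-away from linear subspaces contains
a `ρ`-almost orthonormal basis; conversely (with constants `C`, `c` depending only on `V`),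
a set containing a `ρ`-almost orthonormal basis is `c ρ^C`-away from linear subspaces. -/
theorem away_from_subspaces_iff_almost_orthonormal_basis
    {V : Type*} [NormedAddCommGroup V] [NormedSpace ℝ V] [FiniteDimensional ℝ V] :
    (∀ ρ : ℝ, 0 < ρ → ρ ≤ 1 / 2 →
      ∀ A : Set V, A ⊆ Metric.closedBall 0 ρ⁻¹ → AwayFromSubspaces ρ A →
        ∃ a : Fin (Module.finrank ℝ V) → V, (∀ k, a k ∈ A) ∧ AlmostONB ρ a) ∧
    (∃ C : ℝ, 1 ≤ C ∧ ∃ c : ℝ, 0 < c ∧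
      ∀ ρ : ℝ, 0 < ρ → ρ ≤ 1 / 2 →
        ∀ A : Set V,
          (∃ a : Fin (Module.finrank ℝ V) → V, (∀ k, a k ∈ A) ∧ AlmostONB ρ a) →
          AwayFromSubspaces (c * ρ ^ C) A) := by
  refine ⟨fun ρ _ _ A hA hAway => exists_almostONB_of_awayFromSubspaces hA hAway le_rfl,
    ((3 * finrank ℝ V + 1 : ℕ) : ℝ), by norm_num, ((finrank ℝ V : ℝ) + 1)⁻¹, by positivity,
    fun ρ hρ hρ2 A ⟨a, haA, ha⟩ => ?_⟩
  rw [Real.rpow_natCast]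
  exact ha.awayFromSubspaces hρ hρ2 haA
end

section
/- Let n be a positive integer and 0 < ρ ≤ 1. For every g ∈ SL_n(ℝ) with operator norm ‖g‖ > ρ^{-n}, the centralizer algebra C(g) = {y ∈ Mat_n(ℝ) : gy = yg} does not act ρ-irreducibly on ℝⁿ; that is, there exists a nonzero proper linear subspace W of ℝⁿ such that for every x ∈ C(g) with ‖x‖ ≤ 1 and every w ∈ W with ‖w‖ ≤ 1, dist(xw, W) < ρ. -/
/-!
Let `μ₁, …, μₙ ≥ 0` be the eigenvalues of `g* g`. Their product is `det (g)² = 1` and, as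
`‖g‖² = max μᵢ`, some `μ₀` exceeds `ρ^(-2n)`. By pigeonhole one of the `n` levels
`c = ρ^(2k) μ₀`, `k < n`, is a gap: every eigenvalue is `≥ c` or `≤ d` for some `d < ρ² c`.
Let `V` be spanned by the eigenvectors with eigenvalue `≥ c` and `W = g V`. If `x` commutes
with `g`, `‖x‖ ≤ 1` and `w = g v ∈ W` has `‖w‖ ≤ 1`, then `‖v‖² ≤ 1 / c`; writing
`x v = p + q` with `p ∈ V`, `q ∈ Vᗮ` gives `x w = g p + g q` with `g p ∈ W`, so
`dist (x w, W)² ≤ ‖g q‖² ≤ d ‖v‖² ≤ d / c < ρ²`.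
-/

open Finset Module Submodule

theorem Finset.exists_lt_card_eq_succ_of_monotone {α : Type*} [Fintype α] {s : ℕ → Finset α}
    (hs : Monotone s) (h0 : (s 0).Nonempty) : ∃ k < Fintype.card α, s k = s (k + 1) := by
  by_contra! h
  have hcard : ∀ k ≤ Fintype.card α, k + 1 ≤ #(s k) := by
    intro k hk
    induction k with
    | zero => exact h0.card_pos
    | succ k ih => exact (ih (by omega)).trans_lt <|
        card_lt_card ((hs k.le_succ).lt_of_ne (h k (by omega)))
  have := card_le_univ (s (Fintype.card α))
  have := hcard _ le_rfl
  omega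

theorem exists_pow_mul_gap {ι : Type*} [Fintype ι] {r a : ℝ} (hr0 : 0 ≤ r) (hr1 : r ≤ 1)
    (ha : 0 ≤ a) {μ : ι → ℝ} {i₀ : ι} (hi₀ : a ≤ μ i₀) :
    ∃ k < Fintype.card ι, ∀ i, r ^ (k + 1) * a ≤ μ i → r ^ k * a ≤ μ i := by
  classical
  obtain ⟨k, hk, hsk⟩ := exists_lt_card_eq_succ_of_monotone (α := ι)
    (s := fun k ↦ {i | r ^ k * a ≤ μ i})
    (fun k l hkl i ↦ by
      simp only [mem_filter, mem_univ, true_and]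
      exact (mul_le_mul_of_nonneg_right (pow_le_pow_of_le_one hr0 hr1 hkl) ha).trans)
    ⟨i₀, by simpa using hi₀⟩
  refine ⟨k, hk, fun i hi ↦ ?_⟩
  have : i ∈ ({i | r ^ k * a ≤ μ i} : Finset ι) := hsk ▸ (by simpa using hi)
  simpa using this

theorem exists_gap_of_prod_le_one {ι : Type*} [Fintype ι] {r : ℝ} (hr0 : 0 < r) (hr1 : r ≤ 1)
    {μ : ι → ℝ} (hprod : ∏ i, μ i ≤ 1) {i₀ : ι} (hi₀ : (r ^ Fintype.card ι)⁻¹ < μ i₀) :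
    ∃ c d, 0 < c ∧ d < r * c ∧ (∃ i, c ≤ μ i) ∧ (∃ i, μ i ≤ d) ∧ ∀ i, c ≤ μ i ∨ μ i ≤ d := by
  classical
  have ha : 0 < μ i₀ := (inv_pos.mpr (pow_pos hr0 _)).trans hi₀
  obtain ⟨k, hk, hgap⟩ := exists_pow_mul_gap hr0.le hr1 ha.le le_rfl (μ := μ)
  set c := r ^ k * μ i₀
  have hc1 : 1 < c := calc
    1 = r ^ Fintype.card ι * (r ^ Fintype.card ι)⁻¹ := (mul_inv_cancel₀ (by positivity)).symm
    _ < r ^ k * μ i₀ := mul_lt_mul' (pow_le_pow_of_le_one hr0.le hr1 hk.le) hi₀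
        (by positivity) (by positivity)
  obtain ⟨i₁, hi₁⟩ : ∃ i, μ i < c := by
    by_contra! h
    have : c ^ Fintype.card ι ≤ ∏ i, μ i := by
      rw [← card_univ, ← prod_const]
      exact prod_le_prod (fun _ _ ↦ (zero_lt_one.trans hc1).le) (fun i _ ↦ h i)
    linarith [one_lt_pow₀ hc1 (Fintype.card_pos_iff.mpr ⟨i₀⟩).ne']
  have hlow : ({i | μ i < c} : Finset ι).Nonempty := ⟨i₁, by simpa using hi₁⟩
  refine ⟨c, ({i | μ i < c} : Finset ι).sup' hlow μ, by positivity, ?_, ⟨i₀, ?_⟩,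
    ⟨i₁, le_sup' μ (by simpa using hi₁)⟩, fun i ↦ ?_⟩
  · refine (sup'_lt_iff hlow).mpr fun i hi ↦ lt_of_not_ge fun h ↦ ?_
    simp only [mem_filter, mem_univ, true_and] at hi
    exact hi.not_ge (hgap i (by rwa [pow_succ', mul_assoc]))
  · exact mul_le_of_le_one_left ha.le (pow_le_one₀ hr0.le hr1)
  · exact (le_or_gt c (μ i)).imp_right fun h ↦ le_sup' μ (by simpa using h)

namespace OrthonormalBasis
variable {ι 𝕜 E : Type*} [Fintype ι] [RCLike 𝕜] [NormedAddCommGroup E] [InnerProductSpace 𝕜 E]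
  (b : OrthonormalBasis ι 𝕜 E) {s : Set ι} {v : E} {i : ι}

theorem repr_apply_eq_zero_of_mem_span_image (hv : v ∈ span 𝕜 (b '' s)) (hi : i ∉ s) :
    b.repr v i = 0 := by
  rw [← b.coe_toBasis, b.toBasis.mem_span_image] at hv
  simpa using mt (@hv i) hi

theorem repr_apply_eq_zero_of_mem_orthogonal_span_image (hv : v ∈ (span 𝕜 (b '' s))ᗮ)
    (hi : i ∈ s) : b.repr v i = 0 := by
  rw [b.repr_apply_apply]
  exact (mem_orthogonal _ v).mp hv _ (subset_span ⟨i, hi, rfl⟩)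

theorem span_image_ne_bot (hs : s.Nonempty) : span 𝕜 (b '' s) ≠ ⊥ := by
  obtain ⟨i, hi⟩ := hs
  exact (Submodule.ne_bot_iff _).mpr ⟨b i, subset_span ⟨i, hi, rfl⟩, b.orthonormal.ne_zero i⟩

theorem span_image_ne_top (hi : i ∉ s) : span 𝕜 (b '' s) ≠ ⊤ := fun h ↦ by
  classical
  simpa [b.repr_self] using b.repr_apply_eq_zero_of_mem_span_image (h ▸ mem_top : b i ∈ _) hi

end OrthonormalBasis

section
variable {E : Type*} [NormedAddCommGroup E] [InnerProductSpace ℝ E]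

theorem OrthonormalBasis.norm_sq_eq_sum_repr_sq {ι : Type*} [Fintype ι]
    (b : OrthonormalBasis ι ℝ E) (v : E) : ‖v‖ ^ 2 = ∑ i, b.repr v i ^ 2 := by
  rw [← b.repr.norm_map, EuclideanSpace.real_norm_sq_eq]

theorem Submodule.map_ne_bot_of_expanding {V : Submodule ℝ E} (hV : V ≠ ⊥) {g : E →L[ℝ] E}
    {c : ℝ} (hc : 0 < c) (hexp : ∀ v ∈ V, c * ‖v‖ ^ 2 ≤ ‖g v‖ ^ 2) :
    V.map (g : E →ₗ[ℝ] E) ≠ ⊥ := by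
  obtain ⟨v, hv, hv0⟩ := (Submodule.ne_bot_iff V).mp hV
  refine (Submodule.ne_bot_iff _).mpr ⟨g v, mem_map_of_mem hv, fun h ↦ ?_⟩
  have := hexp v hv
  rw [h, norm_zero] at this
  have : 0 < c * ‖v‖ ^ 2 := by positivity
  linarith

theorem infDist_apply_map_sq_le {g x : E →L[ℝ] E} (V : Submodule ℝ E) [V.HasOrthogonalProjection]
    {c d : ℝ} (hc : 0 < c) (hd : 0 ≤ d) (hV : ∀ v ∈ V, c * ‖v‖ ^ 2 ≤ ‖g v‖ ^ 2)
    (hVperp : ∀ q ∈ Vᗮ, ‖g q‖ ^ 2 ≤ d * ‖q‖ ^ 2) (hxg : Commute g x) (hx : ‖x‖ ≤ 1)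
    {w : E} (hw : w ∈ V.map (g : E →ₗ[ℝ] E)) (hw1 : ‖w‖ ≤ 1) :
    Metric.infDist (x w) (V.map (g : E →ₗ[ℝ] E) : Set E) ^ 2 ≤ d / c := by
  obtain ⟨v, hv, rfl⟩ := Submodule.mem_map.mp hw
  simp only [ContinuousLinearMap.coe_coe] at hw1 ⊢
  set p := V.starProjection (x v)
  have hq : x v - p ∈ Vᗮ := V.sub_starProjection_mem_orthogonal (x v)
  have hdist : Metric.infDist (x (g v)) (V.map (g : E →ₗ[ℝ] E) : Set E) ≤ ‖g (x v - p)‖ := by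
    have hgx : x (g v) = g (x v) := (DFunLike.congr_fun hxg.eq v).symm
    rw [map_sub, hgx, ← dist_eq_norm]
    exact Metric.infDist_le_dist_of_mem (Submodule.mem_map_of_mem (V.starProjection_apply_mem _))
  have hqv : ‖x v - p‖ ≤ ‖v‖ := calc
    ‖x v - p‖ = ‖Vᗮ.starProjection (x v)‖ := by rw [V.starProjection_orthogonal_val]
    _ ≤ ‖x v‖ := Vᗮ.norm_starProjection_apply_le _
    _ ≤ ‖v‖ := x.le_of_opNorm_le hx v |>.trans_eq (one_mul _)
  have hv1 : ‖v‖ ^ 2 ≤ 1 / c := by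
    rw [le_div_iff₀' hc]
    nlinarith [hV v hv, norm_nonneg (g v)]
  calc Metric.infDist (x (g v)) (V.map (g : E →ₗ[ℝ] E) : Set E) ^ 2 ≤ ‖g (x v - p)‖ ^ 2 := by
        gcongr; exact Metric.infDist_nonneg
    _ ≤ d * ‖x v - p‖ ^ 2 := hVperp _ hq
    _ ≤ d * (1 / c) := by gcongr; exact (pow_le_pow_left₀ (norm_nonneg _) hqv 2).trans hv1
    _ = d / c := by ring

variable [FiniteDimensional ℝ E]

namespace LinearMap.IsSymmetric
variable {T : E →ₗ[ℝ] E} (hT : T.IsSymmetric) {n : ℕ} (hn : finrank ℝ E = n)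

theorem inner_map_self_eq_sum_eigenvalues (v : E) :
    inner ℝ (T v) v = ∑ i, hT.eigenvalues hn i * (hT.eigenvectorBasis hn).repr v i ^ 2 := by
  rw [← (hT.eigenvectorBasis hn).repr.inner_map_map, PiLp.inner_apply]
  refine sum_congr rfl fun i _ ↦ ?_
  rw [hT.eigenvectorBasis_apply_self_apply, RCLike.inner_apply, conj_trivial,
    RCLike.ofReal_real_eq_id, id_eq]
  ring

theorem inner_map_self_le {M : ℝ} {v : E}
    (h : ∀ i, (hT.eigenvectorBasis hn).repr v i ≠ 0 → hT.eigenvalues hn i ≤ M) :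
    inner ℝ (T v) v ≤ M * ‖v‖ ^ 2 := by
  rw [hT.inner_map_self_eq_sum_eigenvalues hn,
    (hT.eigenvectorBasis hn).norm_sq_eq_sum_repr_sq, mul_sum]
  refine sum_le_sum fun i _ ↦ ?_
  by_cases hi : (hT.eigenvectorBasis hn).repr v i = 0
  · simp [hi]
  · exact mul_le_mul_of_nonneg_right (h i hi) (sq_nonneg _)

theorem le_inner_map_self {c : ℝ} {v : E}
    (h : ∀ i, (hT.eigenvectorBasis hn).repr v i ≠ 0 → c ≤ hT.eigenvalues hn i) :
    c * ‖v‖ ^ 2 ≤ inner ℝ (T v) v := by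
  rw [hT.inner_map_self_eq_sum_eigenvalues hn,
    (hT.eigenvectorBasis hn).norm_sq_eq_sum_repr_sq, mul_sum]
  refine sum_le_sum fun i _ ↦ ?_
  by_cases hi : (hT.eigenvectorBasis hn).repr v i = 0
  · simp [hi]
  · exact mul_le_mul_of_nonneg_right (h i hi) (sq_nonneg _)

end LinearMap.IsSymmetric

theorem LinearMap.norm_apply_sq_eq_inner_adjoint_mul_self (g : E →ₗ[ℝ] E) (v : E) :
    ‖g v‖ ^ 2 = inner ℝ ((adjoint g * g) v) v := by
  rw [Module.End.mul_apply, adjoint_inner_left, real_inner_self_eq_norm_sq]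

theorem LinearMap.det_adjoint_mul_self (g : E →ₗ[ℝ] E) : (adjoint g * g).det = |g.det| ^ 2 := by
  rw [← normDet_eq_abs_det]
  exact_mod_cast g.normDet_sq.symm

theorem Submodule.map_ne_top_of_ne_top {V : Submodule ℝ E} (hV : V ≠ ⊤) (f : E →ₗ[ℝ] E) :
    V.map f ≠ ⊤ := fun h ↦ by
  have := (finrank_map_le f V).trans_lt (finrank_lt hV)
  rw [h, finrank_top] at this
  exact this.false

theorem ContinuousLinearMap.exists_submodule_expansion_gap (g : E →L[ℝ] E)
    (hdet : |LinearMap.det (g : E →ₗ[ℝ] E)| ≤ 1) {ρ : ℝ} (hρ0 : 0 < ρ) (hρ1 : ρ ≤ 1)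
    (hg : (ρ ^ finrank ℝ E)⁻¹ < ‖g‖) :
    ∃ (V : Submodule ℝ E) (c d : ℝ), V ≠ ⊥ ∧ V ≠ ⊤ ∧ 0 < c ∧ 0 ≤ d ∧ d < ρ ^ 2 * c ∧
      (∀ v ∈ V, c * ‖v‖ ^ 2 ≤ ‖g v‖ ^ 2) ∧ ∀ q ∈ Vᗮ, ‖g q‖ ^ 2 ≤ d * ‖q‖ ^ 2 := by
  set T := LinearMap.adjoint (g : E →ₗ[ℝ] E) * g
  have hT : T.IsSymmetric := LinearMap.isSymmetric_adjoint_mul_self _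
  set e := hT.eigenvectorBasis rfl
  set μ := hT.eigenvalues rfl
  have hμ0 : ∀ i, 0 ≤ μ i :=
    (LinearMap.isPositive_adjoint_comp_self (g : E →ₗ[ℝ] E)).nonneg_eigenvalues rfl
  have hnorm (v : E) : ‖g v‖ ^ 2 = inner ℝ (T v) v :=
    (g : E →ₗ[ℝ] E).norm_apply_sq_eq_inner_adjoint_mul_self v
  have hprod : ∏ i, μ i ≤ 1 := by
    have : ∏ i, μ i = |LinearMap.det (g : E →ₗ[ℝ] E)| ^ 2 := by
      rw [← (g : E →ₗ[ℝ] E).det_adjoint_mul_self, hT.det_eq_prod_eigenvalues rfl]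
      rfl
    rw [this]
    exact pow_le_one₀ (abs_nonneg _) hdet
  obtain ⟨i₀, hi₀⟩ : ∃ i, ((ρ ^ 2) ^ finrank ℝ E)⁻¹ < μ i := by
    by_contra! h
    refine hg.not_ge (g.opNorm_le_bound (by positivity) fun v ↦ ?_)
    rw [← pow_le_pow_iff_left₀ (norm_nonneg _) (by positivity) two_ne_zero, hnorm, mul_pow,
      inv_pow, ← pow_mul, mul_comm _ 2, pow_mul]
    exact hT.inner_map_self_le rfl fun i _ ↦ h i
  obtain ⟨c, d, hc, hdc, ⟨i₁, hi₁⟩, ⟨i₂, hi₂⟩, hcd⟩ :=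
    exists_gap_of_prod_le_one (by positivity) (pow_le_one₀ hρ0.le hρ1) hprod (i₀ := i₀)
      (by simpa using hi₀)
  have hd : d < c := hdc.trans_le (mul_le_of_le_one_left hc.le (pow_le_one₀ hρ0.le hρ1))
  refine ⟨span ℝ (e '' {i | c ≤ μ i}), c, d, e.span_image_ne_bot ⟨i₁, hi₁⟩,
    e.span_image_ne_top (i := i₂) (by simpa using hi₂.trans_lt hd), hc, (hμ0 i₂).trans hi₂,
    hdc, fun v hv ↦ ?_, fun q hq ↦ ?_⟩
  · rw [hnorm]
    exact hT.le_inner_map_self rfl fun i hi ↦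
      not_not.mp fun h ↦ hi (e.repr_apply_eq_zero_of_mem_span_image hv h)
  · rw [hnorm]
    exact hT.inner_map_self_le rfl fun i hi ↦
      (hcd i).resolve_left fun h ↦ hi (e.repr_apply_eq_zero_of_mem_orthogonal_span_image hq h)

end

theorem centralizer_of_large_matrix_not_irreducible_general (n : ℕ)
    (ρ : ℝ) (hρ0 : 0 < ρ) (hρ1 : ρ ≤ 1)
    (g : EuclideanSpace ℝ (Fin n) →L[ℝ] EuclideanSpace ℝ (Fin n))
    (hdet : LinearMap.det (g : EuclideanSpace ℝ (Fin n) →ₗ[ℝ] EuclideanSpace ℝ (Fin n)) = 1)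
    (hg : (ρ ^ n)⁻¹ < ‖g‖) :
    ∃ W : Submodule ℝ (EuclideanSpace ℝ (Fin n)), W ≠ ⊥ ∧ W ≠ ⊤ ∧
      ∀ x : EuclideanSpace ℝ (Fin n) →L[ℝ] EuclideanSpace ℝ (Fin n),
        g * x = x * g → ‖x‖ ≤ 1 →
          ∀ w ∈ W, ‖w‖ ≤ 1 →
            Metric.infDist (x w) (W : Set (EuclideanSpace ℝ (Fin n))) < ρ := by
  obtain ⟨V, c, d, hV_bot, hV_top, hc, hd, hdc, hexp, hcontr⟩ :=
    g.exists_submodule_expansion_gap (by simp [hdet]) hρ0 hρ1 (by simpa using hg)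
  refine ⟨V.map (g : EuclideanSpace ℝ (Fin n) →ₗ[ℝ] EuclideanSpace ℝ (Fin n)),
    map_ne_bot_of_expanding hV_bot hc hexp, map_ne_top_of_ne_top hV_top _,
    fun x hxg hx w hw hw1 ↦ ?_⟩
  have hdist := infDist_apply_map_sq_le V hc hd hexp hcontr hxg hx hw hw1
  exact (pow_lt_pow_iff_left₀ Metric.infDist_nonneg hρ0.le two_ne_zero).mp
    (hdist.trans_lt ((div_lt_iff₀ hc).mpr hdc))

/-- **Lemma 5.3**: if `g` has determinant `1` and operator norm greater than `ρ^{-n}`, then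
the centralizer of `g` in `End(ℝⁿ)` does not act `ρ`-irreducibly on `ℝⁿ`. -/
theorem centralizer_of_large_matrix_not_irreducible (n : ℕ) (hn : 0 < n)
    (ρ : ℝ) (hρ0 : 0 < ρ) (hρ1 : ρ ≤ 1)
    (g : EuclideanSpace ℝ (Fin n) →L[ℝ] EuclideanSpace ℝ (Fin n))
    (hdet : LinearMap.det (g : EuclideanSpace ℝ (Fin n) →ₗ[ℝ] EuclideanSpace ℝ (Fin n)) = 1)
    (hg : (ρ ^ n)⁻¹ < ‖g‖) :
    ∃ W : Submodule ℝ (EuclideanSpace ℝ (Fin n)), W ≠ ⊥ ∧ W ≠ ⊤ ∧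
      ∀ x : EuclideanSpace ℝ (Fin n) →L[ℝ] EuclideanSpace ℝ (Fin n),
        g * x = x * g → ‖x‖ ≤ 1 →
          ∀ w ∈ W, ‖w‖ ≤ 1 →
            Metric.infDist (x w) (W : Set (EuclideanSpace ℝ (Fin n))) < ρ :=
  centralizer_of_large_matrix_not_irreducible_general n ρ hρ0 hρ1 g hdet hg
end

section
/- Let n be a positive integer. There exist constants K ≥ 1 and C ≥ 1 depending only on n such that for every 0 < ρ ≤ 1/2 the following holds. Let x, y ∈ Mat_n(ℝ) and suppose there exists g ∈ GL_n(ℂ) with g x g^{-1} = y and ‖g‖ + ‖g^{-1}‖ < ρ^{-1} (operator norms). Then there exists h ∈ GL_n(ℝ) with h x h^{-1} = y and ‖h‖ + ‖h^{-1}‖ ≤ K ρ^{-C}. -/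
/-!
Write `g = A + iB` with `A, B` real. Both `A` and `B` intertwine `x` and `y`, hence so does every
real matrix `A + tB`. The polynomial `q(t) = det (A + tB)` has degree at most `n` and
`q(i) = det g`, which is bounded below by `(n! ‖g⁻¹‖ⁿ)⁻¹`. Lagrange interpolation at the nodes
`0, 1, …, n` bounds `|q(i)|` by a constant times `max_{k ≤ n} |q(k)|`, so some `h = A + kB`
with `k ≤ n` has `|det h| ≳ ρⁿ`. Its entries are `O(ρ⁻¹)`, and Cramer's rule then bounds the
entries of `h⁻¹` by `O(ρ⁻²ⁿ)`.
-/

open Finset Polynomial Complex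
open scoped Matrix.Norms.L2Operator

/-- Operator norm of a square matrix over a normed ring `D`, acting by matrix-vector
multiplication on `Dᵐ` equipped with the `ℓ²`-norm. -/
noncomputable def matOpNorm {m : ℕ} {D : Type*} [NormedRing D]
    (M : Matrix (Fin m) (Fin m) D) : ℝ :=
  sSup ((fun v : PiLp 2 (fun _ : Fin m => D) =>
    ‖(WithLp.equiv 2 (Fin m → D)).symm (M.mulVec (WithLp.equiv 2 (Fin m → D) v))‖) ''
    Metric.closedBall 0 1)

lemma matOpNorm_eq_l2_opNorm {m : ℕ} {𝕜 : Type*} [RCLike 𝕜] (M : Matrix (Fin m) (Fin m) 𝕜) :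
    matOpNorm M = ‖M‖ := by
  rw [Matrix.cstar_norm_def, ← ContinuousLinearMap.sSup_unitClosedBall_eq_norm]
  rfl

lemma Lagrange.exists_norm_eval_le_mul_norm_eval_node {𝕜 ι : Type*} [NormedField 𝕜]
    [DecidableEq ι] {s : Finset ι} (hs : s.Nonempty) {v : ι → 𝕜} (hv : Set.InjOn v s)
    {q : 𝕜[X]} (hq : q.degree < #s) (z : 𝕜) :
    ∃ j ∈ s, ‖q.eval z‖ ≤ (∑ i ∈ s, ‖(Lagrange.basis s v i).eval z‖) * ‖q.eval (v j)‖ := by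
  obtain ⟨j, hj, hmax⟩ := s.exists_max_image (fun i => ‖q.eval (v i)‖) hs
  refine ⟨j, hj, ?_⟩
  conv_lhs => rw [Lagrange.eq_interpolate hv hq, Lagrange.interpolate_apply, eval_finsetSum]
  calc _ ≤ ∑ i ∈ s, ‖(C (q.eval (v i)) * Lagrange.basis s v i).eval z‖ := norm_sum_le _ _
    _ ≤ ∑ i ∈ s, ‖(Lagrange.basis s v i).eval z‖ * ‖q.eval (v j)‖ := by
        gcongr with i hi
        rw [eval_mul, eval_C, norm_mul, mul_comm]
        gcongr
        exact hmax i hi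
    _ = _ := (sum_mul _ _ _).symm

namespace Matrix

section L2OpNorm

variable {m n 𝕜 : Type*} [Fintype m] [Fintype n] [DecidableEq n] [RCLike 𝕜]

lemma norm_entry_le_l2_opNorm (A : Matrix m n 𝕜) (i : m) (j : n) : ‖A i j‖ ≤ ‖A‖ := by
  simpa using (PiLp.norm_apply_le _ i).trans (A.l2_opNorm_mulVec (EuclideanSpace.single j 1))

lemma l2_opNorm_le_sum_norm_entry (A : Matrix m n 𝕜) : ‖A‖ ≤ ∑ i, ∑ j, ‖A i j‖ := by
  classical
  rw [l2_opNorm_def]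
  refine ContinuousLinearMap.opNorm_le_bound _ (by positivity) fun v => ?_
  have hA : (toEuclideanLin.trans LinearMap.toContinuousLinearMap) A v =
      ∑ i, ∑ j, EuclideanSpace.single i (A i j * v j) := by
    ext k
    simp [mulVec, dotProduct, Pi.single_apply]
  calc _ ≤ ∑ i, ∑ j, ‖A i j‖ * ‖v j‖ := by
        rw [hA]
        refine (norm_sum_le _ _).trans (sum_le_sum fun i _ => (norm_sum_le _ _).trans ?_)
        simp
    _ ≤ ∑ i, ∑ j, ‖A i j‖ * ‖v‖ := by gcongr; exact PiLp.norm_apply_le v _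
    _ = _ := by simp only [← sum_mul]

lemma l2_opNorm_le_of_norm_entry_le {A : Matrix m n 𝕜} {c : ℝ} (h : ∀ i j, ‖A i j‖ ≤ c) :
    ‖A‖ ≤ Fintype.card m * Fintype.card n * c :=
  calc ‖A‖ ≤ ∑ i, ∑ j, ‖A i j‖ := l2_opNorm_le_sum_norm_entry A
    _ ≤ ∑ _i : m, ∑ _j : n, c := by gcongr; exact h _ _
    _ = _ := by simp [mul_assoc]

end L2OpNorm

section EntryBounds

variable {n 𝕜 : Type*} [Fintype n] [DecidableEq n] [NormedField 𝕜]

lemma norm_det_le_of_norm_entry_le {A : Matrix n n 𝕜} {c : ℝ} (h : ∀ i j, ‖A i j‖ ≤ c) :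
    ‖A.det‖ ≤ (Fintype.card n).factorial * c ^ Fintype.card n := by
  simpa using det_le (abv := IsAbsoluteValue.toAbsoluteValue (norm : 𝕜 → ℝ)) h

lemma norm_adjugate_apply_le {A : Matrix n n 𝕜} {c : ℝ} (hc : 1 ≤ c)
    (h : ∀ i j, ‖A i j‖ ≤ c) (i j : n) :
    ‖A.adjugate i j‖ ≤ (Fintype.card n).factorial * c ^ Fintype.card n := by
  rw [adjugate_apply]
  refine norm_det_le_of_norm_entry_le fun k l => ?_
  rcases eq_or_ne k j with rfl | hk
  · rw [updateRow_self, Pi.single_apply]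
    split_ifs <;> simp [hc, zero_le_one.trans hc]
  · rw [updateRow_ne hk]
    exact h k l

lemma norm_inv_apply_le {A : Matrix n n 𝕜} {c : ℝ} (hc : 1 ≤ c)
    (h : ∀ i j, ‖A i j‖ ≤ c) (i j : n) :
    ‖A⁻¹ i j‖ ≤ (Fintype.card n).factorial * c ^ Fintype.card n / ‖A.det‖ := by
  rw [inv_def, Ring.inverse_eq_inv', smul_apply, smul_eq_mul, norm_mul, norm_inv,
    inv_mul_eq_div]
  gcongr
  exact norm_adjugate_apply_le hc h i j

end EntryBounds

section Conditioning

variable {n 𝕜 : Type*} [Fintype n] [DecidableEq n] [RCLike 𝕜]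

lemma l2_opNorm_add_l2_opNorm_inv_le {A : Matrix n n 𝕜} {c : ℝ} (hc : 1 ≤ c)
    (h : ∀ i j, ‖A i j‖ ≤ c) :
    ‖A‖ + ‖A⁻¹‖ ≤ Fintype.card n ^ 2 *
      (c + (Fintype.card n).factorial * c ^ Fintype.card n / ‖A.det‖) := by
  have hA := l2_opNorm_le_of_norm_entry_le h
  have hA' := l2_opNorm_le_of_norm_entry_le (norm_inv_apply_le hc h)
  linarith

lemma GeneralLinearGroup.norm_det_inv_le (g : GL n 𝕜) :
    ‖(g : Matrix n n 𝕜).det‖⁻¹ ≤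
      (Fintype.card n).factorial * ‖((g⁻¹ : GL n 𝕜) : Matrix n n 𝕜)‖ ^ Fintype.card n := by
  have hdet : (g : Matrix n n 𝕜).det * ((g⁻¹ : GL n 𝕜) : Matrix n n 𝕜).det = 1 := by
    rw [← det_mul, Units.mul_inv, det_one]
  rw [← norm_inv, inv_eq_of_mul_eq_one_right hdet]
  exact norm_det_le_of_norm_entry_le fun i j => norm_entry_le_l2_opNorm _ i j

end Conditioning

lemma map_re_add_I_smul_map_im {n : Type*} (G : Matrix n n ℂ) :
    (G.map re).map ofReal + I • (G.map im).map ofReal = G := by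
  ext i j
  simpa [mul_comm] using re_add_im (G i j)

section RealPencil

variable {n : Type*} [Fintype n] [DecidableEq n]

lemma aeval_det_X_smul_add_C {R S : Type*} [CommRing R] [CommRing S] [Algebra R S]
    (A B : Matrix n n R) (s : S) :
    aeval s ((X : R[X]) • B.map C + A.map C).det =
      (A.map (algebraMap R S) + s • B.map (algebraMap R S)).det := by
  rw [AlgHom.map_det]
  congr 1
  ext i j
  simp only [AlgHom.mapMatrix_apply, map_apply, add_apply, smul_apply, smul_eq_mul, map_add,
    map_mul, aeval_X, aeval_C]
  ring

lemma map_re_add_smul_map_im_mul_eq {G : Matrix n n ℂ} {x y : Matrix n n ℝ}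
    (h : G * x.map ofReal = y.map ofReal * G) (t : ℝ) :
    (G.map re + t • G.map im) * x = y * (G.map re + t • G.map im) := by
  have hre : G.map re * x = y * G.map re := by
    ext i j
    simpa [mul_apply, re_sum] using congr_arg re (congr_fun₂ h i j)
  have him : G.map im * x = y * G.map im := by
    ext i j
    simpa [mul_apply, im_sum] using congr_arg im (congr_fun₂ h i j)
  rw [add_mul, mul_add, smul_mul, Matrix.mul_smul, hre, him]

end RealPencil

lemma norm_map_re_add_smul_map_im_apply_le {n : Type*} [Fintype n] [DecidableEq n]
    (G : Matrix n n ℂ) (t : ℝ) (i j : n) :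
    ‖(G.map re + t • G.map im) i j‖ ≤ (1 + |t|) * ‖G‖ := by
  have hG := G.norm_entry_le_l2_opNorm i j
  calc ‖(G.map re + t • G.map im) i j‖ ≤ |(G i j).re| + |t| * |(G i j).im| := by
        simpa [abs_mul] using abs_add_le (G i j).re (t * (G i j).im)
    _ ≤ ‖G‖ + |t| * ‖G‖ := by
        gcongr
        · exact (abs_re_le_norm _).trans hG
        · exact (abs_im_le_norm _).trans hG
    _ = (1 + |t|) * ‖G‖ := by ring

end Matrix

noncomputable def interpolationConstAtI (n : ℕ) : ℝ :=
  ∑ k ∈ range (n + 1), ‖(Lagrange.basis (range (n + 1)) (fun k : ℕ => (k : ℂ)) k).eval I‖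

lemma interpolationConstAtI_nonneg (n : ℕ) : 0 ≤ interpolationConstAtI n :=
  sum_nonneg fun _ _ => norm_nonneg _

lemma exists_nat_le_norm_det_le (n : ℕ) (G : Matrix (Fin n) (Fin n) ℂ) :
    ∃ t : ℕ, t ≤ n ∧
      ‖G.det‖ ≤ interpolationConstAtI n * |(G.map re + (t : ℝ) • G.map im).det| := by
  set q : ℝ[X] := ((X : ℝ[X]) • (G.map im).map C + (G.map re).map C).det
  have hdeg : (q.map (algebraMap ℝ ℂ)).degree < #(range (n + 1)) := by
    refine (degree_map_le).trans_lt ((degree_le_natDegree).trans_lt ?_)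
    have := natDegree_det_X_add_C_le (G.map im) (G.map re)
    simp only [card_range, Fintype.card_fin] at this ⊢
    exact_mod_cast Nat.lt_succ_of_le this
  obtain ⟨t, ht, hle⟩ := Lagrange.exists_norm_eval_le_mul_norm_eval_node nonempty_range_add_one
    (Nat.cast_injective.injOn (f := fun k : ℕ => (k : ℂ))) hdeg I
  refine ⟨t, Nat.lt_succ_iff.mp (mem_range.mp ht), ?_⟩
  have hI : aeval I q = G.det := by
    rw [Matrix.aeval_det_X_smul_add_C, coe_algebraMap, Matrix.map_re_add_I_smul_map_im]
  have ht : aeval (t : ℂ) q = ((G.map re + (t : ℝ) • G.map im).det : ℂ) := by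
    rw [← ofReal_natCast, ← coe_algebraMap, aeval_algebraMap_apply, Matrix.aeval_det_X_smul_add_C]
    simp
  simpa [eval_map_algebraMap, hI, ht, interpolationConstAtI] using hle

lemma exists_real_conj_of_complex_conj {n : ℕ} {x y : Matrix (Fin n) (Fin n) ℝ}
    {g : GL (Fin n) ℂ}
    (hconj : (g : Matrix (Fin n) (Fin n) ℂ) * x.map ofReal * (↑g⁻¹ : Matrix (Fin n) (Fin n) ℂ) =
      y.map ofReal) {r : ℝ}
    (hg : ‖(g : Matrix (Fin n) (Fin n) ℂ)‖ ≤ r) (hginv : ‖(↑g⁻¹ : Matrix (Fin n) (Fin n) ℂ)‖ ≤ r) :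
    ∃ h : GL (Fin n) ℝ, (h : Matrix (Fin n) (Fin n) ℝ) * x * (↑h⁻¹ : Matrix (Fin n) (Fin n) ℝ) = y ∧
      (∀ i j, ‖(h : Matrix (Fin n) (Fin n) ℝ) i j‖ ≤ (n + 1) * r) ∧
      ‖(h : Matrix (Fin n) (Fin n) ℝ).det‖⁻¹ ≤ interpolationConstAtI n * (n.factorial * r ^ n) := by
  set B := interpolationConstAtI n
  have hB : 0 ≤ B := interpolationConstAtI_nonneg n
  set G : Matrix (Fin n) (Fin n) ℂ := ↑g
  obtain ⟨t, htn, hdet⟩ := exists_nat_le_norm_det_le n G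
  set h := G.map re + (t : ℝ) • G.map im
  rw [← Real.norm_eq_abs] at hdet
  have hdetG : 0 < ‖G.det‖ :=
    norm_pos_iff.2 ((Matrix.isUnit_iff_isUnit_det G).1 g.isUnit).ne_zero
  have hdeth_pos : 0 < ‖h.det‖ := pos_of_mul_pos_right (hdetG.trans_le hdet) hB
  refine ⟨.mkOfDetNeZero h (norm_pos_iff.1 hdeth_pos), ?_, fun i j => ?_, ?_⟩
  · rw [Units.mul_inv_eq_iff_eq_mul]
    exact Matrix.map_re_add_smul_map_im_mul_eq ((Units.mul_inv_eq_iff_eq_mul g).1 hconj) t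
  · have htn' : |(t : ℝ)| ≤ n := by rw [Nat.abs_cast]; exact_mod_cast htn
    calc ‖h i j‖ ≤ (1 + |(t : ℝ)|) * ‖G‖ := G.norm_map_re_add_smul_map_im_apply_le t i j
      _ ≤ (n + 1) * r := by rw [add_comm]; gcongr
  · have hinv := Matrix.GeneralLinearGroup.norm_det_inv_le g
    rw [Fintype.card_fin] at hinv
    calc ‖h.det‖⁻¹ = ‖G.det‖ * ‖G.det‖⁻¹ * ‖h.det‖⁻¹ := by field_simp
      _ ≤ B * ‖h.det‖ * ‖G.det‖⁻¹ * ‖h.det‖⁻¹ := by gcongr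
      _ = B * ‖G.det‖⁻¹ := by field_simp
      _ ≤ B * (n.factorial * r ^ n) := by gcongr; exact hinv.trans (by gcongr)

lemma l2_opNorm_add_l2_opNorm_inv_le_of_det {n : ℕ} (hn : 0 < n) {B r : ℝ} (hB : 0 ≤ B)
    (hr : 1 ≤ r) {A : Matrix (Fin n) (Fin n) ℝ} (hent : ∀ i j, ‖A i j‖ ≤ (n + 1) * r)
    (hdet : ‖A.det‖⁻¹ ≤ B * (n.factorial * r ^ n)) :
    ‖A‖ + ‖A⁻¹‖ ≤ n ^ 2 * (1 + n.factorial ^ 2 * B) * (n + 1) ^ (2 * n) * r ^ (2 * n) := by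
  set a : ℝ := (n + 1) * r
  have ha : 1 ≤ a := by nlinarith [n.cast_nonneg (α := ℝ)]
  have hbound := Matrix.l2_opNorm_add_l2_opNorm_inv_le ha hent
  rw [Fintype.card_fin] at hbound
  calc _ ≤ n ^ 2 * (a + n.factorial * a ^ n / ‖A.det‖) := hbound
    _ ≤ n ^ 2 * (a ^ (2 * n) + n.factorial * a ^ n * (B * (n.factorial * a ^ n))) := by
        rw [div_eq_mul_inv]
        gcongr
        · exact le_self_pow₀ ha (by omega)
        · exact hdet.trans (by gcongr; nlinarith [n.cast_nonneg (α := ℝ)])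
    _ = _ := by
        simp only [a, mul_pow]
        ring

/-- **Lemma 5.4**: two real matrices conjugate by a complex matrix `g` with
`‖g‖ + ‖g⁻¹‖ < ρ⁻¹` are conjugate by a real matrix `h` with `‖h‖ + ‖h⁻¹‖ ≤ K ρ^{-C}`. -/
theorem real_conjugacy_from_complex_conjugacy (n : ℕ) (hn : 0 < n) :
    ∃ K : ℝ, 1 ≤ K ∧ ∃ C : ℝ, 1 ≤ C ∧
      ∀ ρ : ℝ, 0 < ρ → ρ ≤ 1 / 2 →
        ∀ x y : Matrix (Fin n) (Fin n) ℝ,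
          ∀ g : Matrix.GeneralLinearGroup (Fin n) ℂ,
            ((↑g : Matrix (Fin n) (Fin n) ℂ) * x.map Complex.ofReal *
                (↑g⁻¹ : Matrix (Fin n) (Fin n) ℂ) = y.map Complex.ofReal) →
            matOpNorm (↑g : Matrix (Fin n) (Fin n) ℂ) +
                matOpNorm (↑g⁻¹ : Matrix (Fin n) (Fin n) ℂ) < ρ⁻¹ →
            ∃ h : Matrix.GeneralLinearGroup (Fin n) ℝ,
              ((↑h : Matrix (Fin n) (Fin n) ℝ) * x * (↑h⁻¹ : Matrix (Fin n) (Fin n) ℝ) = y) ∧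
              matOpNorm (↑h : Matrix (Fin n) (Fin n) ℝ) +
                  matOpNorm (↑h⁻¹ : Matrix (Fin n) (Fin n) ℝ) ≤ K * ρ ^ (-C) := by
  set B := interpolationConstAtI n
  have hB : 0 ≤ B := interpolationConstAtI_nonneg n
  have hn1 : (1 : ℝ) ≤ n := by exact_mod_cast hn
  refine ⟨n ^ 2 * (1 + n.factorial ^ 2 * B) * (n + 1) ^ (2 * n), ?_,
    (2 * n : ℕ), by exact_mod_cast (by omega : 1 ≤ 2 * n), ?_⟩
  · have h1 : (1 : ℝ) ≤ 1 + n.factorial ^ 2 * B := le_add_of_nonneg_right (by positivity)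
    have h2 : (1 : ℝ) ≤ (n + 1) ^ (2 * n) := one_le_pow₀ (by linarith)
    exact one_le_mul_of_one_le_of_one_le (one_le_mul_of_one_le_of_one_le (one_le_pow₀ hn1) h1) h2
  intro ρ hρ hρ2 x y g hconj hnorm
  simp only [matOpNorm_eq_l2_opNorm] at hnorm ⊢
  have hr : 1 ≤ ρ⁻¹ := (one_le_inv₀ hρ).2 (by linarith)
  obtain ⟨h, hconj_h, hent, hdet⟩ := exists_real_conj_of_complex_conj hconj
    (r := ρ⁻¹) (by linarith [norm_nonneg (↑g⁻¹ : Matrix (Fin n) (Fin n) ℂ)])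
    (by linarith [norm_nonneg (g : Matrix (Fin n) (Fin n) ℂ)])
  refine ⟨h, hconj_h, ?_⟩
  rw [Matrix.coe_units_inv, Real.rpow_neg hρ.le, Real.rpow_natCast, ← inv_pow]
  exact l2_opNorm_add_l2_opNorm_inv_le_of_det hn hB hr hent hdet
end
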